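/- arXiv:0801.2058 — 2 statements merged into one kernel-verified Lean document; each statement's English description precedes it below -/
import Mathlib

section
/- Every invariant bilinear form on the extended Schrödinger-Virasoro algebra sv~ is zero. That is, if f: sv~ × sv~ → ℂ is bilinear and satisfies f([x,y],z) = f(x,[y,z]) for all x,y,z ∈ sv~, then f = 0. -/
/-- Index type for the basis of the extended Schrödinger-Virasoro Lie algebra.
`Y n` stands for the generator `Y_{n+1/2}`. -/
inductive SVIdx : Type
  | L : ℤ → SVIdx
  | M : ℤ → SVIdx
  | N : ℤ → SVIdx
  | Y : ℤ → SVIdx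

/-- A complex Lie algebra `g` is (a copy of) the extended Schrödinger-Virasoro
Lie algebra if it has a basis indexed by `SVIdx` whose brackets are given by the
structure constants of `sv~`. -/
structure ExtSV (g : Type*) [LieRing g] [LieAlgebra ℂ g] where
  b : Module.Basis SVIdx ℂ g
  LL : ∀ m n : ℤ, ⁅b (SVIdx.L m), b (SVIdx.L n)⁆ = ((n : ℂ) - (m : ℂ)) • b (SVIdx.L (m + n))
  MM : ∀ m n : ℤ, ⁅b (SVIdx.M m), b (SVIdx.M n)⁆ = 0
  NN : ∀ m n : ℤ, ⁅b (SVIdx.N m), b (SVIdx.N n)⁆ = 0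
  YY : ∀ m n : ℤ, ⁅b (SVIdx.Y m), b (SVIdx.Y n)⁆ = ((m : ℂ) - (n : ℂ)) • b (SVIdx.M (m + n + 1))
  LM : ∀ m n : ℤ, ⁅b (SVIdx.L m), b (SVIdx.M n)⁆ = (n : ℂ) • b (SVIdx.M (m + n))
  LN : ∀ m n : ℤ, ⁅b (SVIdx.L m), b (SVIdx.N n)⁆ = (n : ℂ) • b (SVIdx.N (m + n))
  LY : ∀ m n : ℤ, ⁅b (SVIdx.L m), b (SVIdx.Y n)⁆ =
      ((n : ℂ) + (1 - (m : ℂ)) / 2) • b (SVIdx.Y (m + n))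
  NM : ∀ m n : ℤ, ⁅b (SVIdx.N m), b (SVIdx.M n)⁆ = (2 : ℂ) • b (SVIdx.M (m + n))
  NY : ∀ m n : ℤ, ⁅b (SVIdx.N m), b (SVIdx.Y n)⁆ = b (SVIdx.Y (m + n))
  MY : ∀ m n : ℤ, ⁅b (SVIdx.M m), b (SVIdx.Y n)⁆ = 0

/-!
The grading operators `ad N₀` and `ad L₀` act diagonally on the basis, and an invariant form
pairs two eigenvectors of `ad u` only if their eigenvalues add up to zero. The `ad N₀`-weights
are `0` on `L`, `N`, `2` on `M` and `1` on `Y`, so only pairs of `L`'s and `N`'s survive, and the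
`ad L₀`-weights force these to be of the form `(X_m, X'_{-m})`. Those die by `f x ⁅x, y⁆ = 0`
and `f ⁅y, x⁆ x = 0`, except for `m = 0`, where one writes `L₀` or `N₀` as a bracket of
`L_{-1}` with `L₁` or `N₁` and moves the bracket across `f`.
-/

section InvariantForm

variable {R L : Type*} [CommRing R] [LieRing L] [LieAlgebra R L]
  {f : L →ₗ[R] L →ₗ[R] R} (hf : ∀ x y z : L, f ⁅x, y⁆ z = f x ⁅y, z⁆)
include hf

theorem apply_lie_eq_neg_apply_lie (u x y : L) : f ⁅u, x⁆ y = -f x ⁅u, y⁆ := by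
  rw [← hf, ← lie_skew, map_neg, LinearMap.neg_apply]

theorem apply_self_lie_eq_zero (x y : L) : f x ⁅x, y⁆ = 0 := by
  rw [← hf, lie_self, map_zero, LinearMap.zero_apply]

theorem apply_lie_self_eq_zero (x y : L) : f ⁅y, x⁆ x = 0 := by
  rw [hf, lie_self, map_zero]

variable [NoZeroDivisors R]

theorem apply_eq_zero_of_lie_eq_smul_left {x y z : L} {a : R} (hxz : ⁅x, z⁆ = a • y)
    (ha : a ≠ 0) : f x y = 0 := by
  have := apply_self_lie_eq_zero hf x z
  rw [hxz, map_smul, smul_eq_mul] at this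
  exact (mul_eq_zero.mp this).resolve_left ha

theorem apply_eq_zero_of_lie_eq_smul_right {x y z : L} {a : R} (hzy : ⁅z, y⁆ = a • x)
    (ha : a ≠ 0) : f x y = 0 := by
  have := apply_lie_self_eq_zero hf y z
  rw [hzy, map_smul, LinearMap.smul_apply, smul_eq_mul] at this
  exact (mul_eq_zero.mp this).resolve_left ha

theorem apply_eq_zero_of_lie_eq_smul_of_add_ne_zero {u x y : L} {a c : R}
    (hx : ⁅u, x⁆ = a • x) (hy : ⁅u, y⁆ = c • y) (hac : a + c ≠ 0) : f x y = 0 := by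
  have := apply_lie_eq_neg_apply_lie hf u x y
  rw [hx, hy, map_smul, LinearMap.smul_apply, map_smul, smul_eq_mul, smul_eq_mul] at this
  have hsum : (a + c) * f x y = 0 := by linear_combination this
  exact (mul_eq_zero.mp hsum).resolve_left hac

end InvariantForm

namespace ExtSV

open SVIdx

def nWeight : SVIdx → ℂ
  | L _ => 0
  | M _ => 2
  | N _ => 0
  | Y _ => 1

noncomputable def lWeight : SVIdx → ℂ
  | L n => n
  | M n => n
  | N n => n
  | Y n => n + 1 / 2

variable {g : Type*} [LieRing g] [LieAlgebra ℂ g] (h : ExtSV g)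

theorem lie_N_zero (i : SVIdx) : ⁅h.b (N 0), h.b i⁆ = nWeight i • h.b i := by
  cases i with
  | L n => rw [← lie_skew, h.LN]; simp [nWeight]
  | M n => simpa [nWeight] using h.NM 0 n
  | N n => simp [nWeight, h.NN]
  | Y n => simpa [nWeight] using h.NY 0 n

theorem lie_L_zero (i : SVIdx) : ⁅h.b (L 0), h.b i⁆ = lWeight i • h.b i := by
  cases i with
  | L n => simpa [lWeight] using h.LL 0 n
  | M n => simpa [lWeight] using h.LM 0 n
  | N n => simpa [lWeight] using h.LN 0 n
  | Y n => simpa [lWeight] using h.LY 0 n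

variable {f : g →ₗ[ℂ] g →ₗ[ℂ] ℂ} (hf : ∀ x y z : g, f ⁅x, y⁆ z = f x ⁅y, z⁆)
include hf

theorem apply_basis_eq_zero_of_nWeight_add_ne_zero {i j : SVIdx}
    (hij : nWeight i + nWeight j ≠ 0) : f (h.b i) (h.b j) = 0 :=
  apply_eq_zero_of_lie_eq_smul_of_add_ne_zero hf (h.lie_N_zero i) (h.lie_N_zero j) hij

theorem apply_basis_eq_zero_of_lWeight_add_ne_zero {i j : SVIdx}
    (hij : lWeight i + lWeight j ≠ 0) : f (h.b i) (h.b j) = 0 :=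
  apply_eq_zero_of_lie_eq_smul_of_add_ne_zero hf (h.lie_L_zero i) (h.lie_L_zero j) hij

theorem apply_N_N (m k : ℤ) : f (h.b (N m)) (h.b (N k)) = 0 := by
  have hN : ⁅h.b (L (m - 1)), h.b (N 1)⁆ = h.b (N m) := by simp [h.LN]
  rw [← hN, hf, h.NN, map_zero]

theorem apply_L_N_of_ne {m k : ℤ} (hmk : m ≠ k) : f (h.b (L m)) (h.b (N k)) = 0 := by
  have hbr : ⁅h.b (L m), h.b (N (k - m))⁆ = ((k : ℂ) - m) • h.b (N k) := by simp [h.LN]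
  exact apply_eq_zero_of_lie_eq_smul_left hf hbr (sub_ne_zero.mpr (by exact_mod_cast hmk.symm))

theorem apply_N_L_of_ne {m k : ℤ} (hmk : m ≠ k) : f (h.b (N m)) (h.b (L k)) = 0 := by
  have hbr : ⁅h.b (N (m - k)), h.b (L k)⁆ = ((k : ℂ) - m) • h.b (N m) := by
    rw [← lie_skew, h.LN, add_sub_cancel, ← neg_smul, Int.cast_sub, neg_sub]
  exact apply_eq_zero_of_lie_eq_smul_right hf hbr (sub_ne_zero.mpr (by exact_mod_cast hmk.symm))

theorem apply_L_L_of_ne {m k : ℤ} (hmk : k ≠ 2 * m) : f (h.b (L m)) (h.b (L k)) = 0 := by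
  have hbr : ⁅h.b (L m), h.b (L (k - m))⁆ = ((k : ℂ) - 2 * m) • h.b (L k) := by
    rw [h.LL, add_sub_cancel, Int.cast_sub]
    congr 1
    ring
  exact apply_eq_zero_of_lie_eq_smul_left hf hbr (sub_ne_zero.mpr (by exact_mod_cast hmk))

theorem apply_L_zero_N_zero : f (h.b (L 0)) (h.b (N 0)) = 0 := by
  have hN : ⁅h.b (L (-1)), h.b (N 1)⁆ = h.b (N 0) := by simp [h.LN]
  rw [← hN, ← hf, h.LL, map_smul, LinearMap.smul_apply, h.apply_L_N_of_ne hf (by norm_num),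
    smul_zero]

theorem apply_N_zero_L_zero : f (h.b (N 0)) (h.b (L 0)) = 0 := by
  have hN : ⁅h.b (L (-1)), h.b (N 1)⁆ = h.b (N 0) := by simp [h.LN]
  rw [← hN, hf, ← lie_skew, h.LN, map_neg, map_smul, h.apply_L_N_of_ne hf (by norm_num),
    smul_zero, neg_zero]

theorem apply_L_zero_L_zero : f (h.b (L 0)) (h.b (L 0)) = 0 := by
  have hL : ⁅h.b (L (-1)), h.b (L 1)⁆ = (2 : ℂ) • h.b (L 0) := by rw [h.LL]; norm_num
  have := hf (h.b (L 0)) (h.b (L (-1))) (h.b (L 1))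
  rw [hL, h.LL, map_smul, map_smul, LinearMap.smul_apply, h.apply_L_L_of_ne hf (by norm_num),
    smul_zero, smul_eq_mul] at this
  simpa using this.symm

theorem apply_L_L_neg (m : ℤ) : f (h.b (L m)) (h.b (L (-m))) = 0 := by
  rcases eq_or_ne m 0 with rfl | hm
  · exact h.apply_L_zero_L_zero hf
  · exact h.apply_L_L_of_ne hf (by omega)

theorem apply_L_N_neg (m : ℤ) : f (h.b (L m)) (h.b (N (-m))) = 0 := by
  rcases eq_or_ne m 0 with rfl | hm
  · exact h.apply_L_zero_N_zero hf
  · exact h.apply_L_N_of_ne hf (by omega)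

theorem apply_N_L_neg (m : ℤ) : f (h.b (N m)) (h.b (L (-m))) = 0 := by
  rcases eq_or_ne m 0 with rfl | hm
  · exact h.apply_N_zero_L_zero hf
  · exact h.apply_N_L_of_ne hf (by omega)

theorem apply_basis_eq_zero (i j : SVIdx) : f (h.b i) (h.b j) = 0 := by
  by_cases hN : nWeight i + nWeight j = 0
  swap
  · exact h.apply_basis_eq_zero_of_nWeight_add_ne_zero hf hN
  by_cases hL : lWeight i + lWeight j = 0
  swap
  · exact h.apply_basis_eq_zero_of_lWeight_add_ne_zero hf hL
  rcases i with m | m | m | m <;> rcases j with k | k | k | k <;>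
    norm_num [nWeight] at hN
  all_goals
    obtain rfl : k = -m := by
      simp only [lWeight] at hL
      exact_mod_cast eq_neg_of_add_eq_zero_right hL
  · exact h.apply_L_L_neg hf m
  · exact h.apply_L_N_neg hf m
  · exact h.apply_N_L_neg hf m
  · exact h.apply_N_N hf m (-m)

end ExtSV

/-- Every invariant bilinear form on `sv~` (symmetry not assumed) is zero. -/
theorem extSV_no_invariant_form {g : Type*} [LieRing g] [LieAlgebra ℂ g] (h : ExtSV g)
    (f : g →ₗ[ℂ] g →ₗ[ℂ] ℂ)
    (hinv : ∀ x y z : g, f ⁅x, y⁆ z = f x ⁅y, z⁆) :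
    f = 0 := by
  refine LinearMap.ext_basis h.b h.b fun i j => ?_
  rw [h.apply_basis_eq_zero hinv i j, LinearMap.zero_apply, LinearMap.zero_apply]
end

section
/- The only nontrivial proper ideals of the extended Schrödinger-Virasoro algebra sv~ are: I₁ = span{M_n}, I₂ = span{M_n, Y_{n+1/2}}, I₃ = span{M_n, Y_{n+1/2}} ⊕ ℂN_0, and I₄ = span{M_n, N_n, Y_{n+1/2}} (n ranging over ℤ). -/
/-- The four candidate underlying subspaces of the nontrivial proper ideals of `sv~`. -/
noncomputable def ExtSV.idealCarriers {g : Type*} [LieRing g] [LieAlgebra ℂ g] (h : ExtSV g) :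
    Fin 4 → Submodule ℂ g
  | 0 => Submodule.span ℂ (Set.range fun n : ℤ => h.b (SVIdx.M n))
  | 1 => Submodule.span ℂ
      (Set.range (fun n : ℤ => h.b (SVIdx.M n)) ∪ Set.range fun n : ℤ => h.b (SVIdx.Y n))
  | 2 => Submodule.span ℂ
      (Set.range (fun n : ℤ => h.b (SVIdx.M n)) ∪ Set.range (fun n : ℤ => h.b (SVIdx.Y n)) ∪
        {h.b (SVIdx.N 0)})
  | 3 => Submodule.span ℂ
      (Set.range (fun n : ℤ => h.b (SVIdx.M n)) ∪ Set.range (fun n : ℤ => h.b (SVIdx.N n)) ∪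
        Set.range fun n : ℤ => h.b (SVIdx.Y n))

/-! `ad L₀` acts diagonally on the basis, so every ideal contains the weight components of its
elements. A component of integral weight `n` is `α L_n + β M_n + γ N_n`, one of weight `n + 1/2`
is a multiple of `Y_{n+1/2}`. Bracketing with `Y_k` and `N_k` shows that `α ≠ 0` forces the ideal
to be everything, and that otherwise each basis vector occurring in an element of a proper ideal
lies in the ideal. Hence a proper ideal is spanned by the basis vectors it contains, and the
relations `[N, M] ∼ M`, `[N, Y] ∼ Y`, `[Y, Y] ∼ M`, `[Y, N] ∼ Y`, `[L, N_j] ∼ j N` leave only the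
four index sets of the statement. -/

namespace Module.Basis

variable {ι K V : Type*} [Field K] [AddCommGroup V] [Module K V] {b : Basis ι K V} {w : ι → K}

lemma repr_apply_of_apply_basis_eq_smul {f : V →ₗ[K] V} (hf : ∀ i, f (b i) = w i • b i) (x : V)
    (i : ι) : b.repr (f x) i = w i * b.repr x i := by
  have : b.coord i ∘ₗ f = w i • b.coord i := b.ext fun j => by
    rcases eq_or_ne j i with rfl | hji <;> simp [*]
  simpa using LinearMap.congr_fun this x

variable [DecidableEq K]

noncomputable def weightComponent (b : Basis ι K V) (w : ι → K) (c : K) (x : V) : V :=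
  b.repr.symm ((b.repr x).filter fun i => w i = c)

lemma repr_weightComponent (c : K) (x : V) (i : ι) :
    b.repr (b.weightComponent w c x) i = if w i = c then b.repr x i else 0 := by
  simp [weightComponent, Finsupp.filter_apply]

lemma weightComponent_mem {f : V →ₗ[K] V} (hf : ∀ i, f (b i) = w i • b i) {p : Submodule K V}
    (hp : ∀ x ∈ p, f x ∈ p) {x : V} (hx : x ∈ p) (c : K) : b.weightComponent w c x ∈ p := by
  suffices key : ∀ S : Finset K, ∀ x ∈ p, (∀ i, b.repr x i ≠ 0 → w i ∈ insert c S) →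
      b.weightComponent w c x ∈ p from
    key ((b.repr x).support.image w) x hx fun i hi =>
      Finset.mem_insert_of_mem (Finset.mem_image_of_mem w (Finsupp.mem_support_iff.2 hi))
  intro S
  induction S using Finset.induction_on with
  | empty =>
    intro x hx hS
    convert hx using 1
    refine b.repr.injective (Finsupp.ext fun i => ?_)
    rw [repr_weightComponent]
    by_cases hi : b.repr x i = 0 <;> simp_all
  | insert d S _ ih =>
    intro x hx hS
    by_cases hdc : d = c
    · exact ih x hx (by simpa [hdc] using hS)
    -- `f - d` kills the weight-`d` part and rescales the weight-`c` part by `c - d`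
    have hy : f x - d • x ∈ p := p.sub_mem (hp x hx) (p.smul_mem d hx)
    have hyS : ∀ i, b.repr (f x - d • x) i ≠ 0 → w i ∈ insert c S := by
      intro i hi
      simp only [map_sub, map_smul, Finsupp.sub_apply, Finsupp.smul_apply, smul_eq_mul, ne_eq,
        repr_apply_of_apply_basis_eq_smul hf, ← sub_mul, mul_eq_zero, not_or, sub_eq_zero] at hi
      simpa [hi.1] using hS i hi.2
    have hcomp : b.weightComponent w c (f x - d • x) = (c - d) • b.weightComponent w c x := by
      refine b.repr.injective (Finsupp.ext fun i => ?_)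
      simp only [repr_weightComponent, map_sub, map_smul, Finsupp.sub_apply, Finsupp.smul_apply,
        smul_eq_mul, repr_apply_of_apply_basis_eq_smul hf]
      split_ifs with hi <;> simp [hi, sub_mul]
    have := p.smul_mem (c - d)⁻¹ (hcomp ▸ ih _ hy hyS)
    rwa [smul_smul, inv_mul_cancel₀ (sub_ne_zero.2 (Ne.symm hdc)), one_smul] at this

end Module.Basis

theorem LieSubmodule.smul_mem_iff {K L M : Type*} [Field K] [LieRing L] [AddCommGroup M]
    [Module K M] [LieRingModule L M] (N : LieSubmodule K L M) {c : K} (hc : c ≠ 0) {x : M} :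
    c • x ∈ N ↔ x ∈ N :=
  Submodule.smul_mem_iff (N : Submodule K M) hc

theorem LieAlgebra.lie_mem_span_of_forall_lie_mem_span {R L ι : Type*} [CommRing R] [LieRing L]
    [LieAlgebra R L] {v : ι → L} (hv : Submodule.span R (Set.range v) = ⊤) {s : Set L}
    (hs : ∀ j, ∀ y ∈ s, ⁅v j, y⁆ ∈ Submodule.span R s) (x : L) {y : L}
    (hy : y ∈ Submodule.span R s) : ⁅x, y⁆ ∈ Submodule.span R s := by
  suffices hxs : ∀ y ∈ s, ⁅x, y⁆ ∈ Submodule.span R s by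
    induction hy using Submodule.span_induction with
    | mem y hy => exact hxs y hy
    | zero => simp
    | add _ _ _ _ h₁ h₂ => rw [lie_add]; exact add_mem h₁ h₂
    | smul c _ _ h₁ => rw [lie_smul]; exact Submodule.smul_mem _ c h₁
  intro y hy
  have hx : x ∈ Submodule.span R (Set.range v) := hv ▸ Submodule.mem_top
  induction hx using Submodule.span_induction with
  | mem _ hu => obtain ⟨j, rfl⟩ := hu; exact hs j y hy
  | zero => simp
  | add _ _ _ _ h₁ h₂ => rw [add_lie]; exact add_mem h₁ h₂
  | smul c _ _ h₁ => rw [smul_lie]; exact Submodule.smul_mem _ c h₁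

namespace ExtSV

variable {g : Type*} [LieRing g] [LieAlgebra ℂ g] (h : ExtSV g)

lemma YL (m n : ℤ) :
    ⁅h.b (.Y m), h.b (.L n)⁆ = (-((m : ℂ) + (1 - (n : ℂ)) / 2)) • h.b (.Y (n + m)) := by
  rw [← lie_skew, h.LY, neg_smul]

lemma YM (m n : ℤ) : ⁅h.b (.Y m), h.b (.M n)⁆ = 0 := by
  rw [← lie_skew, h.MY, neg_zero]

lemma YN (m n : ℤ) : ⁅h.b (.Y m), h.b (.N n)⁆ = -h.b (.Y (n + m)) := by
  rw [← lie_skew, h.NY]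

lemma NL (m n : ℤ) : ⁅h.b (.N m), h.b (.L n)⁆ = (-(m : ℂ)) • h.b (.N (n + m)) := by
  rw [← lie_skew, h.LN, neg_smul]

/-- Twice the `ad L₀`-eigenvalue of a basis vector, doubled to be integral on `Y_{n+1/2}`. -/
def twiceWeight : SVIdx → ℤ
  | .L n | .M n | .N n => 2 * n
  | .Y n => 2 * n + 1

lemma two_smul_ad_L_zero_basis (i : SVIdx) :
    ((2 : ℂ) • LieAlgebra.ad ℂ g (h.b (.L 0))) (h.b i) = (twiceWeight i : ℂ) • h.b i := by
  cases i <;> simp [LieAlgebra.ad_apply, h.LL, h.LM, h.LN, h.LY, twiceWeight, smul_smul]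
  ring_nf

lemma weightComponent_even (x : g) (n : ℤ) :
    h.b.weightComponent (fun i => (twiceWeight i : ℂ)) (2 * n : ℤ) x =
      h.b.repr x (.L n) • h.b (.L n) + h.b.repr x (.M n) • h.b (.M n) +
        h.b.repr x (.N n) • h.b (.N n) := by
  classical
  refine h.b.repr.injective (Finsupp.ext fun i => ?_)
  simp only [Module.Basis.repr_weightComponent, Int.cast_inj]
  cases i <;> simp only [twiceWeight, Finsupp.single_apply, Finsupp.add_apply, map_add, map_smul,
    Module.Basis.repr_self, Finsupp.smul_apply, smul_eq_mul]
  all_goals split_ifs <;> grind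

lemma weightComponent_odd (x : g) (n : ℤ) :
    h.b.weightComponent (fun i => (twiceWeight i : ℂ)) (2 * n + 1 : ℤ) x =
      h.b.repr x (.Y n) • h.b (.Y n) := by
  classical
  refine h.b.repr.injective (Finsupp.ext fun i => ?_)
  simp only [Module.Basis.repr_weightComponent, Int.cast_inj]
  cases i <;> simp only [twiceWeight, Finsupp.single_apply, map_smul, Module.Basis.repr_self,
    Finsupp.smul_apply, smul_eq_mul]
  all_goals split_ifs <;> grind

variable {I : LieIdeal ℂ g}

lemma weightComponent_mem_lieIdeal {x : g} (hx : x ∈ I) (c : ℂ) :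
    h.b.weightComponent (fun i => (twiceWeight i : ℂ)) c x ∈ I :=
  Module.Basis.weightComponent_mem h.two_smul_ad_L_zero_basis
    (fun _ hy => I.smul_mem 2 (I.lie_mem hy)) hx c

lemma eq_top_of_forall_basis_mem (hb : ∀ i, h.b i ∈ I) : I = ⊤ := by
  rw [← LieSubmodule.toSubmodule_eq_top, eq_top_iff, ← h.b.span_eq, Submodule.span_le]
  rintro _ ⟨i, rfl⟩
  exact hb i

variable {h}

lemma M_mem_of_M_mem {j : ℤ} (hj : h.b (.M j) ∈ I) (n : ℤ) : h.b (.M n) ∈ I := by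
  have := I.lie_mem (x := h.b (.N (n - j))) hj
  rw [h.NM, sub_add_cancel] at this
  exact (I.smul_mem_iff two_ne_zero).1 this

lemma Y_mem_of_Y_mem {j : ℤ} (hj : h.b (.Y j) ∈ I) (n : ℤ) : h.b (.Y n) ∈ I := by
  simpa [h.NY] using I.lie_mem (x := h.b (.N (n - j))) hj

lemma M_mem_of_Y_mem {j : ℤ} (hj : h.b (.Y j) ∈ I) (n : ℤ) : h.b (.M n) ∈ I := by
  have := I.lie_mem (x := h.b (.Y 0)) (Y_mem_of_Y_mem hj (-2))
  norm_num [h.YY] at this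
  exact M_mem_of_M_mem this n

lemma Y_mem_of_N_mem {j : ℤ} (hj : h.b (.N j) ∈ I) (n : ℤ) : h.b (.Y n) ∈ I := by
  simpa [YN] using I.neg_mem (I.lie_mem (x := h.b (.Y (n - j))) hj)

lemma N_mem_of_N_mem {j : ℤ} (hj0 : j ≠ 0) (hj : h.b (.N j) ∈ I) (n : ℤ) : h.b (.N n) ∈ I := by
  have := I.lie_mem (x := h.b (.L (n - j))) hj
  rw [h.LN, sub_add_cancel] at this
  exact (I.smul_mem_iff (by exact_mod_cast hj0)).1 this

lemma eq_top_of_L_zero_mem (h0 : h.b (.L 0) ∈ I) : I = ⊤ := by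
  have hN : h.b (.N 1) ∈ I := by simpa [NL] using I.lie_mem (x := h.b (.N 1)) h0
  refine h.eq_top_of_forall_basis_mem fun i => ?_
  cases i with
  | L n =>
    rcases eq_or_ne n 0 with rfl | hn
    · exact h0
    · have := I.lie_mem (x := h.b (.L n)) h0
      rw [h.LL, add_zero] at this
      exact (I.smul_mem_iff (by simpa using hn)).1 this
  | M n => exact M_mem_of_Y_mem (Y_mem_of_N_mem hN 0) n
  | N n => exact N_mem_of_N_mem one_ne_zero hN n
  | Y n => exact Y_mem_of_N_mem hN n

lemma L_zero_mem_of_L_mem {n : ℤ} (hn : h.b (.L n) ∈ I) : h.b (.L 0) ∈ I := by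
  rcases eq_or_ne n 0 with rfl | hn0
  · exact hn
  have := I.lie_mem (x := h.b (.L (-n))) hn
  rw [h.LL, neg_add_cancel] at this
  exact (I.smul_mem_iff (by push_cast; simpa [sub_eq_add_neg, ← two_mul] using hn0)).1 this

lemma Y_mem_of_L_M_N_mem {n : ℤ} {α β γ : ℂ} (hα : α ≠ 0)
    (hy : α • h.b (.L n) + β • h.b (.M n) + γ • h.b (.N n) ∈ I) (m : ℤ) : h.b (.Y m) ∈ I := by
  -- the coefficient is affine in `k` with slope `α ≠ 0`, so it cannot vanish at both `0` and `1`
  obtain ⟨k, hk⟩ : ∃ k : ℤ, α * ((k : ℂ) + (1 - n) / 2) + γ ≠ 0 := by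
    by_contra! hk
    have h0 := hk 0
    have h1 := hk 1
    push_cast at h0 h1
    exact hα (by linear_combination h1 - h0)
  have hbr : ⁅h.b (.Y k), α • h.b (.L n) + β • h.b (.M n) + γ • h.b (.N n)⁆ =
      (-(α * ((k : ℂ) + (1 - n) / 2) + γ)) • h.b (.Y (n + k)) := by
    rw [lie_add, lie_add, lie_smul, lie_smul, lie_smul, YL, YM, YN, smul_zero]
    module
  exact Y_mem_of_Y_mem ((I.smul_mem_iff (neg_ne_zero.2 hk)).1 (hbr ▸ I.lie_mem hy)) m

lemma N_mem_of_L_N_mem {n : ℤ} {α γ : ℂ} (hα : α ≠ 0)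
    (hz : α • h.b (.L n) + γ • h.b (.N n) ∈ I) (m : ℤ) : h.b (.N m) ∈ I := by
  obtain ⟨k, hk0, hnk⟩ : ∃ k : ℤ, k ≠ 0 ∧ n + k ≠ 0 :=
    ⟨if n = -1 then 2 else 1, by split_ifs <;> omega, by split_ifs <;> omega⟩
  have hbr : ⁅h.b (.N k), α • h.b (.L n) + γ • h.b (.N n)⁆ = (-(α * k)) • h.b (.N (n + k)) := by
    rw [lie_add, lie_smul, lie_smul, NL, h.NN, smul_zero]
    module
  exact N_mem_of_N_mem hnk ((I.smul_mem_iff (by simp [hα, hk0])).1 (hbr ▸ I.lie_mem hz)) m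

lemma eq_top_of_L_M_N_mem {n : ℤ} {α β γ : ℂ} (hα : α ≠ 0)
    (hy : α • h.b (.L n) + β • h.b (.M n) + γ • h.b (.N n) ∈ I) : I = ⊤ := by
  have hz : α • h.b (.L n) + γ • h.b (.N n) ∈ I := by
    have := I.sub_mem hy (I.smul_mem β (M_mem_of_Y_mem (Y_mem_of_L_M_N_mem hα hy 0) n))
    rwa [add_sub_right_comm, add_sub_cancel_right] at this
  have hL : α • h.b (.L n) ∈ I := by
    have := I.sub_mem hz (I.smul_mem γ (N_mem_of_L_N_mem hα hz n))
    rwa [add_sub_cancel_right] at this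
  exact eq_top_of_L_zero_mem (L_zero_mem_of_L_mem ((I.smul_mem_iff hα).1 hL))

lemma repr_L_eq_zero (hI : I ≠ ⊤) {x : g} (hx : x ∈ I) (n : ℤ) : h.b.repr x (.L n) = 0 := by
  by_contra hα
  have := h.weightComponent_mem_lieIdeal hx (2 * n : ℤ)
  rw [weightComponent_even] at this
  exact hI (eq_top_of_L_M_N_mem hα this)

lemma Y_mem_of_M_N_mem {n : ℤ} {β γ : ℂ} (hγ : γ ≠ 0)
    (hy : β • h.b (.M n) + γ • h.b (.N n) ∈ I) (m : ℤ) : h.b (.Y m) ∈ I := by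
  have hbr : ⁅h.b (.Y 0), β • h.b (.M n) + γ • h.b (.N n)⁆ = (-γ) • h.b (.Y n) := by
    rw [lie_add, lie_smul, lie_smul, YM, YN, add_zero]
    module
  exact Y_mem_of_Y_mem ((I.smul_mem_iff (neg_ne_zero.2 hγ)).1 (hbr ▸ I.lie_mem hy)) m

lemma basis_mem_of_repr_ne_zero (hI : I ≠ ⊤) {x : g} (hx : x ∈ I) {i : SVIdx}
    (hi : h.b.repr x i ≠ 0) : h.b i ∈ I := by
  have hy (n : ℤ) : h.b.repr x (.M n) • h.b (.M n) + h.b.repr x (.N n) • h.b (.N n) ∈ I := by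
    have := h.weightComponent_mem_lieIdeal hx (2 * n : ℤ)
    rwa [weightComponent_even, repr_L_eq_zero hI hx, zero_smul, zero_add] at this
  cases i with
  | L n => exact absurd (repr_L_eq_zero hI hx n) hi
  | M n =>
    by_cases hγ : h.b.repr x (.N n) = 0
    · exact (I.smul_mem_iff hi).1 (by simpa [hγ] using hy n)
    · exact M_mem_of_Y_mem (Y_mem_of_M_N_mem hγ (hy n) 0) n
  | N n =>
    have hM := M_mem_of_Y_mem (Y_mem_of_M_N_mem hi (hy n) 0) n
    refine (I.smul_mem_iff hi).1 ?_
    simpa using I.sub_mem (hy n) (I.smul_mem (h.b.repr x (.M n)) hM)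
  | Y n =>
    have := h.weightComponent_mem_lieIdeal hx (2 * n + 1 : ℤ)
    rw [weightComponent_odd] at this
    exact (I.smul_mem_iff hi).1 this

def carrierIndices : Fin 4 → Set SVIdx
  | 0 => Set.range .M
  | 1 => Set.range .M ∪ Set.range .Y
  | 2 => Set.range .M ∪ Set.range .Y ∪ {.N 0}
  | 3 => Set.range .M ∪ Set.range .N ∪ Set.range .Y

variable (h) in
lemma idealCarriers_eq_span (k : Fin 4) :
    h.idealCarriers k = Submodule.span ℂ (h.b '' carrierIndices k) := by
  fin_cases k <;> simp only [idealCarriers, carrierIndices, Set.image_union, Set.image_singleton,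
    ← Set.range_comp] <;> rfl

lemma coe_eq_span_basis_mem (hI : I ≠ ⊤) :
    (I : Submodule ℂ g) = Submodule.span ℂ (h.b '' {i | h.b i ∈ I}) := by
  refine le_antisymm (fun x hx => h.b.mem_span_image.2 fun i hi => ?_) ?_
  · exact basis_mem_of_repr_ne_zero hI hx (Finsupp.mem_support_iff.1 hi)
  · exact Submodule.span_le.2 (Set.image_subset_iff.2 fun _ hi => hi)

lemma exists_basis_mem_of_ne_bot (hbot : I ≠ ⊥) (hI : I ≠ ⊤) : ∃ i, h.b i ∈ I := by
  obtain ⟨x, hx, hx0⟩ : ∃ x ∈ I, x ≠ 0 := by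
    by_contra! h0
    exact hbot ((LieSubmodule.eq_bot_iff I).2 h0)
  obtain ⟨i, hi⟩ : ∃ i, h.b.repr x i ≠ 0 := by
    by_contra! h0
    exact hx0 (h.b.repr.map_eq_zero_iff.1 (Finsupp.ext h0))
  exact ⟨i, basis_mem_of_repr_ne_zero hI hx hi⟩

lemma exists_basis_mem_eq_carrierIndices (hbot : I ≠ ⊥) (hI : I ≠ ⊤) :
    ∃ k, {i | h.b i ∈ I} = carrierIndices k := by
  have hL (n : ℤ) : h.b (.L n) ∉ I := fun hn =>
    hI (eq_top_of_L_zero_mem (L_zero_mem_of_L_mem hn))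
  by_cases hN : ∃ j ≠ 0, h.b (.N j) ∈ I
  · obtain ⟨j, hj0, hj⟩ := hN
    refine ⟨3, Set.ext fun i => ?_⟩
    cases i <;> simp [carrierIndices, hL, N_mem_of_N_mem hj0 hj, Y_mem_of_N_mem hj,
      M_mem_of_Y_mem (Y_mem_of_N_mem hj 0)]
  have hNz (n : ℤ) (hn : h.b (.N n) ∈ I) : n = 0 := by
    by_contra hn0
    exact hN ⟨n, hn0, hn⟩
  by_cases hN0 : h.b (.N 0) ∈ I
  · have hNiff (n : ℤ) : h.b (.N n) ∈ I ↔ n = 0 := ⟨hNz n, by rintro rfl; exact hN0⟩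
    refine ⟨2, Set.ext fun i => ?_⟩
    cases i <;> simp [carrierIndices, hL, hNiff, Y_mem_of_N_mem hN0,
      M_mem_of_Y_mem (Y_mem_of_N_mem hN0 0)]
  have hNn (n : ℤ) : h.b (.N n) ∉ I := fun hn => hN0 (hNz n hn ▸ hn)
  by_cases hY : ∃ j, h.b (.Y j) ∈ I
  · obtain ⟨j, hj⟩ := hY
    refine ⟨1, Set.ext fun i => ?_⟩
    cases i <;> simp [carrierIndices, hL, hNn, Y_mem_of_Y_mem hj, M_mem_of_Y_mem hj]
  push Not at hY
  obtain ⟨j, hj⟩ : ∃ j, h.b (.M j) ∈ I := by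
    obtain ⟨i, hi⟩ := exists_basis_mem_of_ne_bot hbot hI
    cases i with
    | M j => exact ⟨j, hi⟩
    | L n => exact absurd hi (hL n)
    | N n => exact absurd hi (hNn n)
    | Y n => exact absurd hi (hY n)
  refine ⟨0, Set.ext fun i => ?_⟩
  cases i <;> simp [carrierIndices, hL, hNn, hY, M_mem_of_M_mem hj]

variable (h)

lemma lie_basis_mem_span_carrierIndices (k : Fin 4) (j : SVIdx) {i : SVIdx}
    (hi : i ∈ carrierIndices k) :
    ⁅h.b j, h.b i⁆ ∈ Submodule.span ℂ (h.b '' carrierIndices k) := by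
  fin_cases k <;> cases j <;> cases i <;>
    simp_all [carrierIndices, h.LM, h.LN, h.LY, h.MM, h.NN, h.YY, h.NM, h.NY, h.MY,
      Submodule.smul_mem, ← lie_skew]

noncomputable def carrierIdeal (k : Fin 4) : LieIdeal ℂ g where
  toSubmodule := h.idealCarriers k
  lie_mem {x _} hy := by
    rw [idealCarriers_eq_span] at hy ⊢
    refine LieAlgebra.lie_mem_span_of_forall_lie_mem_span h.b.span_eq ?_ x hy
    rintro j _ ⟨i, hi, rfl⟩
    exact h.lie_basis_mem_span_carrierIndices k j hi

lemma carrierIdeal_ne_bot (k : Fin 4) : h.carrierIdeal k ≠ ⊥ := by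
  refine fun hbot => h.b.ne_zero (.M 0) ((LieSubmodule.eq_bot_iff _).1 hbot _ ?_)
  change _ ∈ h.idealCarriers k
  fin_cases k <;> simp [idealCarriers_eq_span, carrierIndices]

lemma carrierIdeal_ne_top (k : Fin 4) : h.carrierIdeal k ≠ ⊤ := by
  refine fun htop => ?_
  have : h.b (.L 0) ∈ h.idealCarriers k := by
    change _ ∈ h.carrierIdeal k
    simp [htop]
  fin_cases k <;> simp [idealCarriers_eq_span, carrierIndices] at this

end ExtSV

/-- The only nontrivial proper ideals of `sv~` are `I₁ = span{M_n}`,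
`I₂ = span{M_n, Y_{n+1/2}}`, `I₃ = span{M_n, Y_{n+1/2}} ⊕ ℂ N₀` and
`I₄ = span{M_n, N_n, Y_{n+1/2}}`. -/
theorem extSV_ideals {g : Type*} [LieRing g] [LieAlgebra ℂ g] (h : ExtSV g) :
    (∀ I : LieIdeal ℂ g, I ≠ ⊥ → I ≠ ⊤ →
      ∃ k : Fin 4, (I : Submodule ℂ g) = h.idealCarriers k) ∧
    (∀ k : Fin 4, ∃ J : LieIdeal ℂ g,
      (J : Submodule ℂ g) = h.idealCarriers k ∧ J ≠ ⊥ ∧ J ≠ ⊤) := by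
  refine ⟨fun I hbot htop => ?_, fun k =>
    ⟨h.carrierIdeal k, rfl, h.carrierIdeal_ne_bot k, h.carrierIdeal_ne_top k⟩⟩
  obtain ⟨k, hk⟩ := h.exists_basis_mem_eq_carrierIndices hbot htop
  exact ⟨k, by rw [h.coe_eq_span_basis_mem htop, hk, h.idealCarriers_eq_span]⟩
end
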